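/- {I ⊆ U : R̲(I) ⊆ X} = {I ⊆ U : for every equivalence class P of R with P ⊄ R̲(X), |P ∩ I| ≤ |P| − 1}. -/

import Mathlib

/-! A block `P` of `U/R` meets `I` in at most `|P| - 1` points exactly when `P ⊄ I`, and
`P ⊆ R̲(X)` exactly when `P ⊆ X`, since `R̲(X)` is a union of blocks. So both sides say that
every block contained in `I` is contained in `X`. -/

open Finset

variable {α : Type*} [Fintype α] [DecidableEq α]

/-- The lower approximation of `S` w.r.t. the equivalence relation `R`:
`{x : [x]_R ⊆ S}`. -/
def lowerApprox (R : Setoid α) [DecidableRel R.r] (S : Finset α) : Finset α :=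
  Finset.univ.filter fun x => ∀ y, R.r x y → y ∈ S


/-- The equivalence class of `x` w.r.t. `R`, as a finset. -/
def cls (R : Setoid α) [DecidableRel R.r] (x : α) : Finset α :=
  Finset.univ.filter fun y => R.r x y

theorem Finset.card_inter_le_card_sub_one_iff {β : Type*} [DecidableEq β] {s t : Finset β}
    (hs : s.Nonempty) : #(s ∩ t) ≤ #s - 1 ↔ ¬s ⊆ t := by
  have hpos : 0 < #s := hs.card_pos
  rw [← inter_eq_left, Nat.le_sub_one_iff_lt hpos]
  exact ⟨fun hlt heq => hlt.ne (congrArg card heq),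
    fun hne => card_lt_card (ssubset_iff_subset_ne.2 ⟨inter_subset_left, hne⟩)⟩

section Classes

variable {β : Type*} [Fintype β] (R : Setoid β) [DecidableRel R.r]

theorem mem_cls {x y : β} : y ∈ cls R x ↔ R x y := by
  simp [cls]

theorem self_mem_cls (x : β) : x ∈ cls R x :=
  (mem_cls R).2 (R.refl' x)

theorem cls_nonempty (x : β) : (cls R x).Nonempty :=
  ⟨x, self_mem_cls R x⟩

theorem cls_eq_of_mem_cls {x y : β} (h : y ∈ cls R x) : cls R y = cls R x := by
  ext z
  simp only [mem_cls]
  exact ⟨R.trans' ((mem_cls R).1 h), R.trans' (R.symm' ((mem_cls R).1 h))⟩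

end Classes

section LowerApprox

variable (R : Setoid α) [DecidableRel R.r]

theorem mem_lowerApprox {S : Finset α} {x : α} : x ∈ lowerApprox R S ↔ cls R x ⊆ S := by
  simp [lowerApprox, subset_iff, mem_cls]

theorem cls_subset_lowerApprox_iff {S : Finset α} {x : α} :
    cls R x ⊆ lowerApprox R S ↔ cls R x ⊆ S := by
  refine ⟨fun h => (mem_lowerApprox R).1 (h (self_mem_cls R x)), fun h y hy => ?_⟩
  rw [mem_lowerApprox, cls_eq_of_mem_cls R hy]
  exact h

theorem lowerApprox_subset_iff {I X : Finset α} :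
    lowerApprox R I ⊆ X ↔ ∀ x, cls R x ⊆ I → cls R x ⊆ X := by
  refine ⟨fun h x hI y hy => h ?_, fun h x hx => ?_⟩
  · rwa [mem_lowerApprox, cls_eq_of_mem_cls R hy]
  · exact h x ((mem_lowerApprox R).1 hx) (self_mem_cls R x)

end LowerApprox

theorem parametric_family_fourth_form (R : Setoid α) [DecidableRel R.r] (X : Finset α) :
    ∀ I : Finset α, lowerApprox R I ⊆ X ↔
      ∀ x : α, ¬ cls R x ⊆ lowerApprox R X → (cls R x ∩ I).card ≤ (cls R x).card - 1 := by
  intro I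
  simp only [card_inter_le_card_sub_one_iff (cls_nonempty R _), cls_subset_lowerApprox_iff,
    not_imp_not]
  exact lowerApprox_subset_iff R
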